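/- Let v, w ∈ ℝ² have positive entries with the slope of w exceeding that of v, let m, M, N ≥ 2 with M ≤ N, define δ_v¹, δ_v², δ_w¹, δ_w² as before, and let δ = δ^{(M,N)} be the diagonal intersection of the ray from (m,0) through (M,N), i.e., δ satisfies (δ − δ_v¹)/(δ_v² − δ_v¹) = δ/N. Then (δ_w² − δ_v²)/(δ_v¹δ_w² − δ_v²δ_w¹) = 1/δ − 1/N. -/
import Mathlib


/-- `(δ_w² − δ_v²)/(δ_v¹δ_w² − δ_v²δ_w¹) = 1/δ − 1/N`. -/
theorem stmt_7 (v₁ v₂ w₁ w₂ m M N : ℝ)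
    (hv₁ : 0 < v₁) (hv₂ : 0 < v₂) (hw₁ : 0 < w₁) (hw₂ : 0 < w₂)
    (hslope : w₂ / w₁ > v₂ / v₁)
    (hm : 2 ≤ m) (hM : 2 ≤ M) (hN : 2 ≤ N) (hMN : M ≤ N)
    (δv₁ δv₂ δw₁ δw₂ δ : ℝ)
    (hδv₁ : δv₁ = v₁ * m / (v₁ + v₂))
    (hδv₂ : δv₂ = (v₁ * M + v₂ * N) / (v₁ + v₂))
    (hδw₁ : δw₁ = w₁ * m / (w₁ + w₂))
    (hδw₂ : δw₂ = (w₁ * M + w₂ * N) / (w₁ + w₂))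
    (hlt : δv₁ < δv₂)
    (hdenpos : 0 < δv₁ * δw₂ - δv₂ * δw₁)
    (hδdef : (δ - δv₁) / (δv₂ - δv₁) = δ / N) :
    (δw₂ - δv₂) / (δv₁ * δw₂ - δv₂ * δw₁) = 1 / δ - 1 / N := by
  have hs : (0:ℝ) < v₁ + v₂ := by linarith
  have ht : (0:ℝ) < w₁ + w₂ := by linarith
  have hN0 : (0:ℝ) < N := by linarith
  have hδv₁pos : 0 < δv₁ := by rw [hδv₁]; positivity
  have hD : N - δv₂ + δv₁ = v₁ * (N - M + m) / (v₁ + v₂) := by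
    rw [hδv₁, hδv₂]; field_simp; ring
  have hDpos : 0 < N - δv₂ + δv₁ := by
    rw [hD]
    have : 0 < N - M + m := by linarith
    positivity
  have hlt' : δv₂ - δv₁ ≠ 0 := by linarith
  have key : δ * (N - δv₂ + δv₁) = δv₁ * N := by
    have h := hδdef
    field_simp at h
    nlinarith [h]
  have hδeq : δ = δv₁ * N / (N - δv₂ + δv₁) := by
    field_simp
    linarith [key]
  have hRHS : 1 / δ - 1 / N = (N - δv₂) / (δv₁ * N) := by
    rw [hδeq]
    field_simp
    ring
  rw [hRHS]
  rw [div_eq_div_iff hdenpos.ne' (by positivity : (δv₁ * N) ≠ 0)]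
  rw [hδv₁, hδv₂, hδw₁, hδw₂]
  field_simp
  ring
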